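/- arXiv:2411.17308 — 3 statements merged into one kernel-verified Lean document; each statement's English description precedes it below -/
import Mathlib

section
/- If D is a special PID (a PID with SL_2(D) = E_2(D)), then any localization S⁻¹D of D at a multiplicative subset S (with 0 ∉ S) is also a special PID. -/
/-- The elementary subgroup `E_n(R)` of `SL_n(R)`: the subgroup generated by the elementary
transvections `1 + t • e_{ij}`, `i ≠ j`. -/
def ElementarySubgroup (n : ℕ) (R : Type) [CommRing R] :
    Subgroup (Matrix.SpecialLinearGroup (Fin n) R) :=
  Subgroup.closure {M : Matrix.SpecialLinearGroup (Fin n) R |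
    ∃ (i j : Fin n) (t : R), i ≠ j ∧ (M : Matrix (Fin n) (Fin n) R) = Matrix.transvection i j t}

/-- `SL_n(R) = E_n(R)`. -/
def IsElementaryGenerated (n : ℕ) (R : Type) [CommRing R] : Prop :=
  ElementarySubgroup n R = ⊤

/-- A special PID: a principal ideal domain `D` with `SL_2(D) = E_2(D)`. -/
def IsSpecialPID (D : Type) [CommRing D] : Prop :=
  IsDomain D ∧ IsPrincipalIdealRing D ∧ IsElementaryGenerated 2 D

/-!
Let `L = S⁻¹D`. Given `M ∈ SL₂(L)`, clear denominators in its first column to get `(a, c)`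
in `D`, and divide by a generator of the ideal `(a, c)` to get a coprime row `(u, v)` with
`u a + v c = 0`. Completing it to `K ∈ SL₂(D) = E₂(D)`, the image of `K` in `E₂(L)` makes
`M` upper triangular, and upper triangular matrices of determinant one are products of
transvections.
-/

open Matrix.SpecialLinearGroup
open scoped MatrixGroups

section ElementarySubgroup

variable {R : Type} [CommRing R]

lemma transvection_mem_elementarySubgroup {n : ℕ} {i j : Fin n} (hij : i ≠ j) (t : R) :
    transvection hij t ∈ ElementarySubgroup n R :=
  Subgroup.subset_closure ⟨i, j, t, hij, rfl⟩

lemma elementarySubgroup_map_le {R' : Type} [CommRing R'] (f : R →+* R') (n : ℕ) :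
    (ElementarySubgroup n R).map (map f) ≤ ElementarySubgroup n R' := by
  rw [ElementarySubgroup, MonoidHom.map_closure]
  refine Subgroup.closure_mono ?_
  rintro _ ⟨N, ⟨i, j, t, hij, hN⟩, rfl⟩
  refine ⟨i, j, f t, hij, ?_⟩
  simp [hN, Matrix.transvection, Matrix.map_add, Matrix.map_single]

lemma coe_transvection_zero_one (t : R) :
    (transvection (by decide : (0 : Fin 2) ≠ 1) t : Matrix (Fin 2) (Fin 2) R) =
      !![1, t; 0, 1] := by
  ext i j; fin_cases i <;> fin_cases j <;> simp [transvection_coe]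

lemma coe_transvection_one_zero (t : R) :
    (transvection (by decide : (1 : Fin 2) ≠ 0) t : Matrix (Fin 2) (Fin 2) R) =
      !![1, 0; t, 1] := by
  ext i j; fin_cases i <;> fin_cases j <;> simp [transvection_coe]

lemma mem_elementarySubgroup_of_apply_one_zero_eq_zero (M : SL(2, R))
    (h : M 1 0 = 0) : M ∈ ElementarySubgroup 2 R := by
  set u := M 0 0
  set v := M 1 1
  set b := M 0 1
  have huv : u * v = 1 := by
    have hdet := M.det_coe
    rw [Matrix.det_fin_two, h] at hdet
    linear_combination hdet
  have h01 : (0 : Fin 2) ≠ 1 := by decide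
  -- `M = diag(u, v) e₁₂(vb)` and `diag(u, v) = w(u) w(-1)`, where
  -- `w(t) = e₁₂(t) e₂₁(-t⁻¹) e₁₂(t) = !![0, t; -t⁻¹, 0]`
  have hM : M = transvection h01 u * transvection h01.symm (-v) * transvection h01 u *
      (transvection h01 (-1) * transvection h01.symm 1 * transvection h01 (-1)) *
      transvection h01 (v * b) := by
    ext i j
    fin_cases i <;> fin_cases j <;>
      simp [coe_transvection_zero_one, coe_transvection_one_zero]
    · linear_combination u * huv
    · linear_combination (b * (u * v - 1) - 1) * huv
    · linear_combination h + huv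
    · linear_combination v * b * huv
  rw [hM]
  apply_rules [mul_mem, transvection_mem_elementarySubgroup]

end ElementarySubgroup

lemma exists_isCoprime_mul_add_mul_eq_zero {D : Type} [CommRing D] [IsDomain D] [IsBezout D]
    (a c : D) : ∃ u v : D, IsCoprime u v ∧ u * a + v * c = 0 := by
  obtain ⟨a', ha⟩ := IsBezout.gcd_dvd_left a c
  obtain ⟨c', hc⟩ := IsBezout.gcd_dvd_right a c
  obtain ⟨x, y, hxy⟩ := IsBezout.gcd_eq_sum a c
  generalize IsBezout.gcd a c = g at ha hc hxy
  subst ha hc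
  by_cases hg : g = 0
  · exact ⟨1, 0, isCoprime_one_left, by simp [hg]⟩
  refine ⟨-c', a', ⟨-y, x, mul_left_cancel₀ hg ?_⟩, by ring⟩
  linear_combination hxy

section Localization

variable {D L : Type} [CommRing D] [CommRing L] [Algebra D L]

lemma IsLocalization.isPrincipalIdealRing [IsPrincipalIdealRing D] (S : Submonoid D)
    [IsLocalization S L] : IsPrincipalIdealRing L :=
  ⟨fun J => IsLocalization.map_under S L J ▸
    (IsPrincipalIdealRing.principal _).map_ringHom (algebraMap D L)⟩

lemma IsLocalization.isElementaryGenerated_two [IsDomain D] [IsBezout D] (S : Submonoid D)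
    [IsLocalization S L] (hD : IsElementaryGenerated 2 D) : IsElementaryGenerated 2 L := by
  refine eq_top_iff.mpr fun M _ => ?_
  obtain ⟨a, c, s, ha, hc⟩ := IsLocalization.surj₂ S L (M 0 0) (M 1 0)
  obtain ⟨u, v, huv, hzero⟩ := exists_isCoprime_mul_add_mul_eq_zero a c
  obtain ⟨K, -, hK⟩ := ModularGroup.bottom_row_surj (R := D)
    (show IsCoprime (![u, v] 0) (![u, v] 1) from huv)
  set K' := Matrix.SpecialLinearGroup.map (algebraMap D L) K
  have hK' : K' ∈ ElementarySubgroup 2 L :=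
    elementarySubgroup_map_le _ 2 (Subgroup.mem_map_of_mem _ (hD ▸ Subgroup.mem_top K))
  have hK'M : (K' * M) 1 0 = 0 := by
    have hu : K 1 0 = u := congrFun hK 0
    have hv : K 1 1 = v := congrFun hK 1
    have hzero' := congrArg (algebraMap D L) hzero
    rw [map_add, map_mul, map_mul, map_zero] at hzero'
    rw [← (IsLocalization.map_units L s).mul_left_eq_zero]
    simp only [K', coe_mul, Matrix.mul_apply, Fin.sum_univ_two, map_apply_coe,
      RingHom.mapMatrix_apply, Matrix.map_apply, hu, hv]
    linear_combination algebraMap D L u * ha + algebraMap D L v * hc + hzero'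
  exact (Subgroup.mul_mem_cancel_left _ hK').mp
    (mem_elementarySubgroup_of_apply_one_zero_eq_zero _ hK'M)

end Localization

/-- Any localization of a special PID at a multiplicative set not containing `0`
is again a special PID. -/
theorem stmt_1 (D : Type) [CommRing D] (hD : IsSpecialPID D)
    (S : Submonoid D) (hS : (0 : D) ∉ S) :
    IsSpecialPID (Localization S) := by
  obtain ⟨hdom, hpid, helem⟩ := hD
  exact ⟨IsLocalization.isDomain_localization (le_nonZeroDivisors_of_noZeroDivisors hS),
    IsLocalization.isPrincipalIdealRing S, IsLocalization.isElementaryGenerated_two S helem⟩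
end

section
/- If D is a special PID, then the Laurent series ring D((x)) is a special PID. -/
/-!
An ideal `I` of `D⸨X⸩` is generated by any power series `F ∈ I` whose constant coefficient
generates the ideal of constant coefficients of the power series in `I`: long division by `F`,
one coefficient at a time, either succeeds or produces some `H ∈ I` with `F(0) ∤ H(0)`.

For `SL₂ = E₂` it suffices to reduce every unimodular row `(f, g)` to `(1, 0)` by elementary
column operations. Write `f = u F` with `u` a unit and `F` a power series, and induct on `F(0)`
along strict divisibility in `D`. Long division of `X^(-ord g) g` by `F` either shows `f ∣ g`,
so that `f` is a unit, or reduces `g` to `X^m H` with `F(0) ∤ H(0)`. A Bézout identity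
`p F(0) + q H(0) = gcd (F(0), H(0))` with `p, q` coprime completes `(p, q)` to a matrix of
`SL₂(D) = E₂(D)`; conjugated by `diag(1, X^(-m))` it turns the row into one with first entry
`u (p F + q H)`, whose constant coefficient is a proper divisor of `F(0)`.
-/

open scoped MatrixGroups

namespace PowerSeries

variable {R : Type*} [CommRing R]

open Classical in
/-- The next digit `(G - F q)_k / F(0)` of long division of `G` by `F`; it is `0` when `F(0)` does
not divide `(G - F q)_k`. -/
noncomputable def divDigit (F G q : R⟦X⟧) (k : ℕ) : R :=
  if h : constantCoeff F ∣ coeff k (G - F * q) then h.choose else 0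

noncomputable def divApprox (F G : R⟦X⟧) : ℕ → R⟦X⟧
  | 0 => 0
  | k + 1 => divApprox F G k + C (divDigit F G (divApprox F G k) k) * X ^ k

theorem coeff_divApprox (F G : R⟦X⟧) (k m : ℕ) :
    coeff m (divApprox F G k) = if m < k then divDigit F G (divApprox F G m) m else 0 := by
  induction k with
  | zero => simp [divApprox]
  | succ k ih =>
    rw [divApprox, map_add, coeff_C_mul_X_pow, ih]
    rcases lt_trichotomy m k with h | rfl | h
    · simp [h, h.ne, h.trans k.lt_succ_self]
    · simp
    · simp [h.not_gt, h.ne', (Nat.succ_le_of_lt h).not_gt]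

theorem coeff_sub_mul_divApprox_eq_zero {F G : R⟦X⟧} {k : ℕ}
    (hdvd : ∀ j < k, constantCoeff F ∣ coeff j (G - F * divApprox F G j)) :
    ∀ j < k, coeff j (G - F * divApprox F G k) = 0 := by
  induction k with
  | zero => intro j hj; omega
  | succ k ih =>
    intro j hj
    have hstep : G - F * divApprox F G (k + 1) =
        (G - F * divApprox F G k) - F * C (divDigit F G (divApprox F G k) k) * X ^ k := by
      rw [divApprox]; ring
    rw [hstep, map_sub, coeff_mul_X_pow']
    rcases (Nat.lt_succ_iff_lt_or_eq.mp hj) with hjk | rfl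
    · rw [ih (fun i hi => hdvd i (hi.trans k.lt_succ_self)) j hjk, if_neg (by omega), sub_zero]
    · have hd := hdvd j j.lt_succ_self
      rw [if_pos le_rfl, Nat.sub_self, coeff_zero_eq_constantCoeff, map_mul, constantCoeff_C,
        divDigit, dif_pos hd, ← hd.choose_spec, sub_self]

theorem dvd_or_exists_sub_mul_eq_X_pow_mul (F G : R⟦X⟧) :
    F ∣ G ∨ ∃ t H : R⟦X⟧, ∃ k : ℕ, G - F * t = X ^ k * H ∧
      ¬ constantCoeff F ∣ constantCoeff H := by
  by_cases hall : ∀ k, constantCoeff F ∣ coeff k (G - F * divApprox F G k)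
  · left
    refine ⟨mk fun k => divDigit F G (divApprox F G k) k, ext fun j => ?_⟩
    have htrunc : trunc (j + 1) (mk fun k => divDigit F G (divApprox F G k) k) =
        trunc (j + 1) (divApprox F G (j + 1)) := by
      ext m
      simp only [coeff_trunc, coeff_mk, coeff_divApprox]
      split_ifs <;> rfl
    have hrem := coeff_sub_mul_divApprox_eq_zero (fun i _ => hall i) j j.lt_succ_self
    rw [map_sub, sub_eq_zero, coeff_mul_eq_coeff_trunc_mul_trunc _ _ j.lt_succ_self] at hrem
    rw [hrem, coeff_mul_eq_coeff_trunc_mul_trunc F (mk _) j.lt_succ_self, htrunc]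
  · right
    push Not at hall
    classical
    set k := Nat.find hall
    have hmin : ∀ j < k, constantCoeff F ∣ coeff j (G - F * divApprox F G j) := fun j hj =>
      not_not.mp (Nat.find_min hall hj)
    obtain ⟨H, hH⟩ := X_pow_dvd_iff.mpr (coeff_sub_mul_divApprox_eq_zero hmin)
    refine ⟨divApprox F G k, H, k, hH, ?_⟩
    have := Nat.find_spec hall
    rwa [hH, coeff_X_pow_mul', if_pos le_rfl, Nat.sub_self, coeff_zero_eq_constantCoeff] at this

end PowerSeries

section Elementary

open Matrix

namespace ElementarySubgroup

variable {n : ℕ} {A B : Type} [CommRing A] [CommRing B]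

theorem mem_of_transvection {M : SL(n, A)} {i j : Fin n} (hij : i ≠ j) {t : A}
    (h : (M : Matrix (Fin n) (Fin n) A) = transvection i j t) : M ∈ ElementarySubgroup n A :=
  Subgroup.subset_closure ⟨i, j, t, hij, h⟩

theorem map_le_of_transvection (Φ : SL(n, A) →* SL(n, B))
    (hΦ : ∀ M : SL(n, A), ∀ i j : Fin n, ∀ t : A, i ≠ j →
      (M : Matrix (Fin n) (Fin n) A) = transvection i j t → Φ M ∈ ElementarySubgroup n B) :
    (ElementarySubgroup n A).map Φ ≤ ElementarySubgroup n B := by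
  rw [Subgroup.map_le_iff_le_comap, ElementarySubgroup, Subgroup.closure_le]
  rintro M ⟨i, j, t, hij, hM⟩
  exact hΦ M i j t hij hM

theorem map_mem (φ : A →+* B) {M : SL(n, A)} (hM : M ∈ ElementarySubgroup n A) :
    Matrix.SpecialLinearGroup.map φ M ∈ ElementarySubgroup n B := by
  refine map_le_of_transvection _ (fun M i j t hij hMt => mem_of_transvection hij (t := φ t) ?_)
    ⟨M, hM, rfl⟩
  rw [Matrix.SpecialLinearGroup.map_apply_coe, RingHom.mapMatrix_apply, hMt]
  ext a b
  simp only [transvection, map_apply, Matrix.add_apply, one_apply, single_apply, map_add,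
    MonoidWithZeroHom.map_ite_one_zero, add_right_inj]
  split_ifs <;> simp

noncomputable def conjDiagonal (c : Fin n → Aˣ) : SL(n, A) →* SL(n, A) where
  toFun M := ⟨diagonal (fun i => (c i : A)) * M * diagonal (fun i => (↑(c i)⁻¹ : A)), by
    rw [det_mul, det_mul, det_diagonal, det_diagonal, M.2, mul_one, ← Finset.prod_mul_distrib]
    simp⟩
  map_one' := Subtype.ext <| by simp [diagonal_mul_diagonal]
  map_mul' M N := Subtype.ext <| by
    have h : diagonal (fun i => (↑(c i)⁻¹ : A)) * diagonal (fun i => (c i : A)) = 1 := by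
      simp [diagonal_mul_diagonal]
    change _ * ((M : Matrix (Fin n) (Fin n) A) * N) * _ =
      (_ * (M : Matrix (Fin n) (Fin n) A) * _) * (_ * (N : Matrix (Fin n) (Fin n) A) * _)
    simp only [Matrix.mul_assoc]
    rw [← Matrix.mul_assoc (diagonal _) (diagonal _), h, Matrix.one_mul]

theorem conjDiagonal_apply (c : Fin n → Aˣ) (M : SL(n, A)) (i j : Fin n) :
    (conjDiagonal c M : Matrix (Fin n) (Fin n) A) i j = c i * M i j * ↑(c j)⁻¹ := by
  change (diagonal (fun i => (c i : A)) * (M : Matrix (Fin n) (Fin n) A) *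
    diagonal (fun i => (↑(c i)⁻¹ : A))) i j = _
  rw [mul_diagonal, diagonal_mul]

theorem conjDiagonal_mem (c : Fin n → Aˣ) {M : SL(n, A)} (hM : M ∈ ElementarySubgroup n A) :
    conjDiagonal c M ∈ ElementarySubgroup n A := by
  refine map_le_of_transvection (B := A) _ (fun M i j t hij hMt =>
    mem_of_transvection hij (t := c i * t * ↑(c j)⁻¹) ?_) ⟨M, hM, rfl⟩
  ext a b
  rw [conjDiagonal_apply, hMt]
  simp only [transvection, Matrix.add_apply, one_apply, single_apply]
  split_ifs <;> simp_all

end ElementarySubgroup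

variable {A : Type} [CommRing A]

def ElementaryRowEquiv (r r' : Fin 2 → A) : Prop :=
  ∃ M : SL(2, A), M ∈ ElementarySubgroup 2 A ∧ r ᵥ* (M : Matrix (Fin 2) (Fin 2) A) = r'

namespace ElementaryRowEquiv

theorem trans {r r' r'' : Fin 2 → A} (h : ElementaryRowEquiv r r')
    (h' : ElementaryRowEquiv r' r'') : ElementaryRowEquiv r r'' := by
  obtain ⟨M, hM, rfl⟩ := h
  obtain ⟨N, hN, rfl⟩ := h'
  exact ⟨M * N, mul_mem hM hN, by rw [Matrix.SpecialLinearGroup.coe_mul, vecMul_vecMul]⟩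

theorem symm {r r' : Fin 2 → A} (h : ElementaryRowEquiv r r') : ElementaryRowEquiv r' r := by
  obtain ⟨M, hM, rfl⟩ := h
  refine ⟨M⁻¹, inv_mem hM, ?_⟩
  rw [vecMul_vecMul, ← Matrix.SpecialLinearGroup.coe_mul, mul_inv_cancel,
    Matrix.SpecialLinearGroup.coe_one, vecMul_one]

theorem of_mem {M : SL(2, A)} (hM : M ∈ ElementarySubgroup 2 A) (f g : A) :
    ElementaryRowEquiv ![f, g] ![f * M 0 0 + g * M 1 0, f * M 0 1 + g * M 1 1] :=
  ⟨M, hM, by ext j; fin_cases j <;> simp [vecMul, dotProduct, Fin.sum_univ_two]⟩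

theorem isCoprime {f g f' g' : A} (h : ElementaryRowEquiv ![f, g] ![f', g'])
    (hfg : IsCoprime f g) : IsCoprime f' g' := by
  obtain ⟨N, -, hN⟩ := h.symm
  have hf := congrFun hN 0
  have hg := congrFun hN 1
  simp only [vecMul, dotProduct, Fin.sum_univ_two, cons_val_zero, cons_val_one] at hf hg
  obtain ⟨u, v, huv⟩ := hfg
  refine ⟨u * N 0 0 + v * N 0 1, u * N 1 0 + v * N 1 1, ?_⟩
  rw [← hf, ← hg] at huv
  linear_combination huv

theorem add_mul_right (f g t : A) : ElementaryRowEquiv ![f, g] ![f, g + f * t] := by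
  have h := of_mem (ElementarySubgroup.mem_of_transvection (M :=
    ⟨transvection 0 1 t, det_transvection_of_ne 0 1 (by decide) t⟩) (by decide) rfl) f g
  convert h using 2 <;> simp [transvection, add_comm]

theorem add_mul_left (f g t : A) : ElementaryRowEquiv ![f, g] ![f + g * t, g] := by
  have h := of_mem (ElementarySubgroup.mem_of_transvection (M :=
    ⟨transvection 1 0 t, det_transvection_of_ne 1 0 (by decide) t⟩) (by decide) rfl) f g
  convert h using 2 <;> simp [transvection]

theorem one_zero_of_isUnit {f : A} (hf : IsUnit f) (g : A) :
    ElementaryRowEquiv ![f, g] ![1, 0] := by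
  obtain ⟨u, rfl⟩ := hf
  have h₁ := add_mul_right (u : A) g (↑u⁻¹ * (1 - g))
  have h₂ := add_mul_left (u : A) 1 (1 - u)
  have h₃ := add_mul_right (1 : A) 1 (-1)
  rw [← mul_assoc, Units.mul_inv, one_mul, add_sub_cancel] at h₁
  rw [one_mul, add_sub_cancel] at h₂
  rw [one_mul, add_neg_cancel] at h₃
  exact (h₁.trans h₂).trans h₃

/-- Complete `(p, q)` to a matrix of `SL₂(D) = E₂(D)` and conjugate it by `diag(1, c)`. -/
theorem exists_of_isCoprime {D : Type} [CommRing D] (hD : IsElementaryGenerated 2 D)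
    (φ : D →+* A) {p q : D} (hpq : IsCoprime p q) (c : Aˣ) (f g : A) :
    ∃ g', ElementaryRowEquiv ![f, g] ![f * φ p + g * (c * φ q), g'] := by
  obtain ⟨a, b, hab⟩ := hpq
  let M : SL(2, D) := ⟨!![p, -b; q, a], by rw [det_fin_two_of]; linear_combination hab⟩
  have hM : M ∈ ElementarySubgroup 2 D := hD ▸ Subgroup.mem_top M
  have h := of_mem (ElementarySubgroup.conjDiagonal_mem (n := 2) ![1, c]
    (ElementarySubgroup.map_mem φ hM)) f g
  rw [ElementarySubgroup.conjDiagonal_apply, ElementarySubgroup.conjDiagonal_apply,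
    Matrix.SpecialLinearGroup.map_apply_coe, RingHom.mapMatrix_apply, map_apply, map_apply] at h
  simp only [cons_val_zero, Units.val_one, of_apply, cons_val', cons_val_fin_one, one_mul, inv_one,
    mul_one, cons_val_one, M] at h
  exact ⟨_, h⟩

end ElementaryRowEquiv

theorem isElementaryGenerated_two_of_forall_isCoprime
    (h : ∀ f g : A, IsCoprime f g → ElementaryRowEquiv ![f, g] ![1, 0]) :
    IsElementaryGenerated 2 A := by
  refine eq_top_iff.mpr fun M _ => ?_
  have hdet : M 0 0 * M 1 1 - M 0 1 * M 1 0 = 1 := by rw [← det_fin_two]; exact M.2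
  obtain ⟨N, hN, hMN⟩ := h (M 0 0) (M 0 1) ⟨M 1 1, -M 1 0, by linear_combination hdet⟩
  set P := M * N
  have h00 : P 0 0 = 1 := congrFun hMN 0
  have h01 : P 0 1 = 0 := congrFun hMN 1
  have h11 : P 1 1 = 1 := by
    have hdetP : P 0 0 * P 1 1 - P 0 1 * P 1 0 = 1 := by rw [← det_fin_two]; exact P.2
    rwa [h00, h01, one_mul, zero_mul, sub_zero] at hdetP
  have hP : P ∈ ElementarySubgroup 2 A := by
    refine ElementarySubgroup.mem_of_transvection (i := 1) (j := 0) (by decide) (t := P 1 0) ?_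
    ext i j
    fin_cases i <;> fin_cases j <;> simp [transvection, h00, h01, h11]
  simpa [P] using mul_mem hP (inv_mem hN)

end Elementary

theorem exists_isCoprime_dvdNotUnit {R : Type*} [CommRing R] [IsDomain R] [IsBezout R] {d b : R}
    (h : ¬ d ∣ b) : ∃ p q : R, IsCoprime p q ∧ DvdNotUnit (d * p + b * q) d := by
  obtain ⟨p, q, hpq⟩ := IsBezout.gcd_eq_sum d b
  obtain ⟨d', hd'⟩ := IsBezout.gcd_dvd_left d b
  obtain ⟨b', hb'⟩ := IsBezout.gcd_dvd_right d b
  generalize IsBezout.gcd d b = e at hpq hd' hb'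
  have he : e ≠ 0 := fun he => h ⟨0, by rw [hb', he, zero_mul, mul_zero]⟩
  have hcop : d' * p + b' * q = 1 :=
    mul_left_cancel₀ he (by linear_combination hpq - p * hd' - q * hb')
  refine ⟨p, q, ⟨d', b', hcop⟩, ?_⟩
  rw [show d * p + b * q = e by linear_combination hpq]
  refine ⟨he, d', fun hu => h ?_, hd'⟩
  rw [hd', hu.mul_right_dvd]
  exact ⟨b', hb'⟩

open PowerSeries HahnSeries

namespace LaurentSeries

section PrincipalIdeal

variable {R : Type*} [CommRing R]

theorem ofPowerSeries_powerSeriesPart_mem {I : Ideal R⸨X⸩} {f : R⸨X⸩} (hf : f ∈ I) :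
    ofPowerSeries ℤ R f.powerSeriesPart ∈ I := by
  rw [ofPowerSeries_powerSeriesPart]
  exact I.mul_mem_left _ hf

theorem single_mul_single_neg (n : ℤ) : (single n 1 : R⸨X⸩) * single (-n) 1 = 1 := by
  rw [single_mul_single, add_neg_cancel, one_mul, single_zero_one]

theorem ofPowerSeries_mem_of_X_pow_mul_mem {I : Ideal R⸨X⸩} {H : R⟦X⟧} {k : ℕ}
    (h : ofPowerSeries ℤ R (X ^ k * H) ∈ I) : ofPowerSeries ℤ R H ∈ I := by
  have hH : ofPowerSeries ℤ R H = single (-(k : ℤ)) 1 * ofPowerSeries ℤ R (X ^ k * H) := by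
    rw [map_mul, ofPowerSeries_X_pow, ← mul_assoc, mul_comm (single _ _), single_mul_single_neg,
      one_mul]
  rw [hH]
  exact I.mul_mem_left _ h

instance [IsPrincipalIdealRing R] : IsPrincipalIdealRing R⸨X⸩ := by
  refine ⟨fun I => ?_⟩
  set J : Ideal R⟦X⟧ := I.comap (ofPowerSeries ℤ R)
  obtain ⟨d, hd⟩ := (IsPrincipalIdealRing.principal (J.map constantCoeff)).principal
  obtain ⟨F, hFJ, rfl⟩ := (Ideal.mem_map_iff_of_surjective _ fun a => ⟨PowerSeries.C a,
    constantCoeff_C a⟩).mp (hd ▸ Submodule.mem_span_singleton_self d)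
  refine ⟨ofPowerSeries ℤ R F, le_antisymm (fun g hg => ?_) ?_⟩
  · rcases dvd_or_exists_sub_mul_eq_X_pow_mul F g.powerSeriesPart with
      ⟨s, hs⟩ | ⟨t, H, k, hH, hndvd⟩
    · refine Ideal.mem_span_singleton.mpr ⟨single g.order 1 * ofPowerSeries ℤ R s, ?_⟩
      calc g = single g.order 1 * ofPowerSeries ℤ R g.powerSeriesPart :=
            (single_order_mul_powerSeriesPart g).symm
        _ = _ := by rw [hs, map_mul]; ring
    · have hHJ : H ∈ J := by
        refine ofPowerSeries_mem_of_X_pow_mul_mem (k := k) ?_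
        rw [← hH, map_sub, map_mul]
        exact I.sub_mem (ofPowerSeries_powerSeriesPart_mem hg) (I.mul_mem_right _ hFJ)
      have hH0 := Ideal.mem_map_of_mem constantCoeff hHJ
      rw [hd, Ideal.submodule_span_eq, Ideal.mem_span_singleton] at hH0
      exact absurd hH0 hndvd
  · rwa [Ideal.submodule_span_eq, Ideal.span_le, Set.singleton_subset_iff]

end PrincipalIdeal

section Elementary

variable {R : Type} [CommRing R]

noncomputable def unitSingle (n : ℤ) : R⸨X⸩ˣ :=
  Units.mkOfMulEqOne _ _ (single_mul_single_neg n)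

@[simp]
theorem coe_unitSingle (n : ℤ) : ((unitSingle n : R⸨X⸩ˣ) : R⸨X⸩) = single n 1 :=
  Units.val_mkOfMulEqOne _

theorem elementaryRowEquiv_powerSeriesPart_sub_mul (u : R⸨X⸩ˣ) (F t : R⟦X⟧) (g : R⸨X⸩) :
    ElementaryRowEquiv ![u * ofPowerSeries ℤ R F, g] ![u * ofPowerSeries ℤ R F,
      single g.order 1 * ofPowerSeries ℤ R (g.powerSeriesPart - F * t)] := by
  convert ElementaryRowEquiv.add_mul_right _ g
    (-((↑u⁻¹ : R⸨X⸩) * single g.order 1 * ofPowerSeries ℤ R t)) using 3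
  rw [map_sub, map_mul, mul_sub, single_order_mul_powerSeriesPart]
  linear_combination (single g.order 1 * ofPowerSeries ℤ R F * ofPowerSeries ℤ R t) * u.mul_inv

theorem exists_elementaryRowEquiv_of_isCoprime (hR : IsElementaryGenerated 2 R) {p q : R}
    (hpq : IsCoprime p q) (u : R⸨X⸩ˣ) (F H : R⟦X⟧) (m : ℤ) :
    ∃ g', ElementaryRowEquiv ![u * ofPowerSeries ℤ R F, single m 1 * ofPowerSeries ℤ R H]
      ![u * ofPowerSeries ℤ R (F * PowerSeries.C p + H * PowerSeries.C q), g'] := by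
  obtain ⟨g', h⟩ := ElementaryRowEquiv.exists_of_isCoprime hR HahnSeries.C hpq
    (u * unitSingle (-m)) (u * ofPowerSeries ℤ R F) (single m 1 * ofPowerSeries ℤ R H)
  refine ⟨g', ?_⟩
  convert h using 3
  simp only [Units.val_mul, coe_unitSingle, map_add, map_mul, ofPowerSeries_C]
  linear_combination (-(u : R⸨X⸩) * ofPowerSeries ℤ R H * HahnSeries.C q) *
    single_mul_single_neg (R := R) m

variable [IsDomain R] [IsPrincipalIdealRing R]

theorem elementaryRowEquiv_one_zero_of_isCoprime (hR : IsElementaryGenerated 2 R)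
    (u : R⸨X⸩ˣ) (F : R⟦X⟧) (g : R⸨X⸩) (hFg : IsCoprime (u * ofPowerSeries ℤ R F) g) :
    ElementaryRowEquiv ![u * ofPowerSeries ℤ R F, g] ![1, 0] := by
  obtain ⟨d, hd⟩ : ∃ d, constantCoeff F = d := ⟨_, rfl⟩
  induction d using (wellFounded_dvdNotUnit (α := R)).induction generalizing u F g with
  | _ d IH =>
    rcases dvd_or_exists_sub_mul_eq_X_pow_mul F g.powerSeriesPart with
      ⟨s, hs⟩ | ⟨t, H, k, hH, hndvd⟩
    · have h := elementaryRowEquiv_powerSeriesPart_sub_mul u F s g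
      rw [hs, sub_self, map_zero, mul_zero] at h
      exact h.trans (.one_zero_of_isUnit (isCoprime_zero_right.mp (h.isCoprime hFg)) 0)
    · have h₁ := elementaryRowEquiv_powerSeriesPart_sub_mul u F t g
      rw [hH, map_mul, ofPowerSeries_X_pow, ← mul_assoc, single_mul_single, one_mul] at h₁
      obtain ⟨p, q, hpq, hlt⟩ := exists_isCoprime_dvdNotUnit (hd ▸ hndvd)
      obtain ⟨g', h₂⟩ := exists_elementaryRowEquiv_of_isCoprime hR hpq u F H (g.order + k)
      have h := h₁.trans h₂
      exact h.trans (IH _ hlt u _ g' (h.isCoprime hFg) (by simp [hd]))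

theorem isElementaryGenerated_two (hR : IsElementaryGenerated 2 R) :
    IsElementaryGenerated 2 R⸨X⸩ := by
  refine isElementaryGenerated_two_of_forall_isCoprime fun f g hfg => ?_
  have hf : (unitSingle f.order : R⸨X⸩ˣ) * ofPowerSeries ℤ R f.powerSeriesPart = f := by
    rw [coe_unitSingle, single_order_mul_powerSeriesPart]
  rw [← hf] at hfg ⊢
  exact elementaryRowEquiv_one_zero_of_isCoprime hR _ _ g hfg

end Elementary

end LaurentSeries

/-- Kopeiko's lemma: if `D` is a special PID, then the formal Laurent series ring
`D((x))` is a special PID. -/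
theorem stmt_2 (D : Type) [CommRing D] (hD : IsSpecialPID D) :
    IsSpecialPID (LaurentSeries D) := by
  obtain ⟨_, _, hE⟩ := hD
  exact ⟨inferInstance, inferInstance, LaurentSeries.isElementaryGenerated_two hE⟩
end

section
/- Let R be a Noetherian commutative ring of Krull dimension at most 1 with SL_2(R) = E_2(R). Then SL_n(R) = E_n(R) for every n ≥ 2. -/
theorem List.prod_ofFn_one_add_of_mul_eq_zero {α : Type*} [Semiring α] {m : ℕ}
    (N : Fin m → α) (h : ∀ k l, N k * N l = 0) :
    (List.ofFn fun k => 1 + N k).prod = 1 + ∑ k, N k := by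
  induction m with
  | zero => simp
  | succ m ih =>
    have h0 : N 0 * ∑ k : Fin m, N k.succ = 0 := by
      rw [Finset.mul_sum]
      exact Finset.sum_eq_zero fun k _ => h _ _
    rw [List.ofFn_succ, List.prod_cons, ih _ fun k l => h _ _, Fin.sum_univ_succ, add_mul, one_mul,
      mul_add, mul_one, h0, add_zero, add_assoc, add_comm (∑ k : Fin m, N k.succ)]

section StableRange

open Ideal

variable {R : Type*} [CommRing R]

theorem Ideal.exists_add_mul_notMem_minimalPrimes [IsNoetherianRing R] (I : Ideal R) (a c : R) :
    ∃ x : R, ∀ p ∈ I.minimalPrimes, c ∉ p → a + x * c ∉ p := by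
  classical
  set S := (I.finite_minimalPrimes_of_isNoetherianRing R).toFinset
  have hS : ∀ p, p ∈ S ↔ p ∈ I.minimalPrimes := fun p => Set.Finite.mem_toFinset _
  set T := S.filter (a ∉ ·)
  set U := S.filter (a ∈ ·)
  -- `x` is taken in every minimal prime avoiding `a` and outside every one containing `a`
  have hTU : ¬ ((T.inf id : Ideal R) : Set R) ⊆ ⋃ q ∈ (U : Set (Ideal R)), q := by
    rw [subset_union_prime ⊥ ⊥ fun q hq _ _ => ((hS q).1 (Finset.mem_filter.1 hq).1).1.1]
    rintro ⟨q, hqU, hTq⟩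
    obtain ⟨hqS, haq⟩ := Finset.mem_filter.1 hqU
    obtain ⟨p, hpT, hpq⟩ := ((hS q).1 hqS).1.1.inf_le'.1 hTq
    obtain ⟨hpS, hap⟩ := Finset.mem_filter.1 hpT
    have hpq : p = q := le_antisymm hpq (((hS q).1 hqS).2 ((hS p).1 hpS).1 hpq)
    exact hap (hpq ▸ haq)
  obtain ⟨x, hxT, hxU⟩ := Set.not_subset.1 hTU
  refine ⟨x, fun p hp hc hp' => ?_⟩
  by_cases ha : a ∈ p
  · have hxc : x * c ∈ p := by simpa using p.sub_mem hp' ha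
    have hpU : p ∈ (U : Set (Ideal R)) := by simp [U, (hS p).2 hp, ha]
    exact hxU (Set.mem_biUnion hpU ((hp.1.1.mem_or_mem hxc).resolve_right hc))
  · have hx : x ∈ p := Finset.inf_le (f := id) (show p ∈ T by simp [T, (hS p).2 hp, ha]) hxT
    exact ha (by simpa using p.sub_mem hp' (p.mul_mem_right c hx))

theorem Ideal.IsPrime.mem_minimalPrimes_of_lt [Ring.KrullDimLE 1 R] {p q : Ideal R}
    (hp : p.IsPrime) (hq : q.IsPrime) (hpq : p < q) : p ∈ minimalPrimes R :=
  (Ring.krullDimLE_one_iff.1 inferInstance p hp).resolve_right fun hmax =>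
    hpq.ne (hmax.eq_of_le hq.ne_top hpq.le)

theorem exists_forall_isPrime_mem_of_add_mul_mem [IsNoetherianRing R] [Ring.KrullDimLE 1 R]
    (K : Ideal R) (a b c : R) :
    ∃ x y : R, ∀ p : Ideal R, p.IsPrime → K ≤ p →
      a + x * c ∈ p → b + y * c ∈ p → c ∈ p := by
  obtain ⟨x, hx⟩ := (⊥ : Ideal R).exists_add_mul_notMem_minimalPrimes a c
  set J := K ⊔ span {a + x * c}
  obtain ⟨y, hy⟩ := J.exists_add_mul_notMem_minimalPrimes b c
  refine ⟨x, y, fun p hp hK ha hb => by_contra fun hc => hy p ?_ hc hb⟩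
  -- `p` is minimal over `J`: a prime strictly inside it is a minimal prime of `R` (dimension
  -- at most one) containing `a + x * c`, hence containing `c`
  refine ⟨⟨hp, sup_le hK ((span_singleton_le_iff_mem p).2 ha)⟩,
    fun q ⟨hq, hJq⟩ hqp => ?_⟩
  by_contra hpq
  exact hx q (hq.mem_minimalPrimes_of_lt hp (lt_of_le_not_ge hqp hpq)) (fun hcq => hc (hqp hcq))
    (hJq (mem_sup_right (mem_span_singleton_self _)))

theorem exists_span_range_add_mul_eq_top [IsNoetherianRing R] [Ring.KrullDimLE 1 R] {m : ℕ}
    (v : Fin (m + 3) → R) (hv : span (Set.range v) = ⊤) :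
    ∃ t : Fin (m + 2) → R, span (Set.range fun i => v i.succ + t i * v 0) = ⊤ := by
  classical
  set K := span ((fun i => v (Fin.succ i)) '' {i | i ≠ 0 ∧ i ≠ Fin.last (m + 1)})
  obtain ⟨x, y, hxy⟩ :=
    exists_forall_isPrime_mem_of_add_mul_mem K (v 1) (v (Fin.last (m + 1)).succ) (v 0)
  set t : Fin (m + 2) → R := fun i => if i = 0 then x else if i = Fin.last (m + 1) then y else 0
  refine ⟨t, by_contra fun hne => ?_⟩
  obtain ⟨M, hM, hle⟩ := exists_le_maximal _ hne
  have hw : ∀ i, v i.succ + t i * v 0 ∈ M := fun i => hle (subset_span ⟨i, rfl⟩)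
  have hK : K ≤ M := span_le.2 <| by
    rintro _ ⟨i, ⟨h0, hl⟩, rfl⟩
    simpa [t, h0, hl] using hw i
  have hc : v 0 ∈ M := hxy M hM.isPrime hK (by simpa [t] using hw 0)
    (by simpa [t, Fin.last_pos.ne'] using hw (Fin.last (m + 1)))
  refine hM.ne_top (top_le_iff.1 (hv ▸ span_le.2 ?_))
  rintro _ ⟨j, rfl⟩
  cases j using Fin.cases with
  | zero => exact hc
  | succ i => simpa using M.sub_mem (hw i) (M.mul_mem_left (t i) hc)

end StableRange

open scoped MatrixGroups

namespace Matrix.SpecialLinearGroup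

variable {R : Type} [CommRing R] {n : ℕ}

theorem transvection_mem_elementarySubgroup {i j : Fin n} (hij : i ≠ j) (t : R) :
    transvection hij t ∈ ElementarySubgroup n R :=
  Subgroup.subset_closure ⟨i, j, t, hij, rfl⟩

theorem prod_ofFn_transvection_mem {m : ℕ} {i j : Fin m → Fin n} (hij : ∀ k, i k ≠ j k)
    (u : Fin m → R) :
    (List.ofFn fun k => transvection (hij k) (u k)).prod ∈ ElementarySubgroup n R :=
  list_prod_mem <| by
    simpa [List.mem_ofFn] using fun k => transvection_mem_elementarySubgroup (hij k) (u k)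

theorem coe_prod_ofFn_transvection {m : ℕ} {i j : Fin m → Fin n} (hij : ∀ k, i k ≠ j k)
    (hji : ∀ k l, j k ≠ i l) (u : Fin m → R) :
    ((List.ofFn fun k => transvection (hij k) (u k)).prod : Matrix (Fin n) (Fin n) R) =
      1 + ∑ k, single (i k) (j k) (u k) := by
  rw [← coeMonoidHom_apply, map_list_prod, List.map_ofFn]
  simp only [Function.comp_def, coeMonoidHom_apply, transvection_coe]
  exact List.prod_ofFn_one_add_of_mul_eq_zero _ fun k l =>
    single_mul_single_of_ne _ _ _ _ (hji k l) _

def colZeroTransvection (u : Fin n → R) : SL(n + 1, R) :=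
  (List.ofFn fun i => transvection (Fin.succ_ne_zero i) (u i)).prod

def rowZeroTransvection (u : Fin n → R) : SL(n + 1, R) :=
  (List.ofFn fun i => transvection (Fin.succ_ne_zero i).symm (u i)).prod

theorem colZeroTransvection_mem (u : Fin n → R) :
    colZeroTransvection u ∈ ElementarySubgroup (n + 1) R :=
  prod_ofFn_transvection_mem _ u

theorem rowZeroTransvection_mem (u : Fin n → R) :
    rowZeroTransvection u ∈ ElementarySubgroup (n + 1) R :=
  prod_ofFn_transvection_mem _ u

theorem colZeroTransvection_smul (u : Fin n → R) (v : Fin (n + 1) → R) :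
    colZeroTransvection u • v = Fin.cons (v 0) fun i => v i.succ + u i * v 0 := by
  rw [Matrix.SpecialLinearGroup.smul_def, colZeroTransvection,
    coe_prod_ofFn_transvection _ fun _ _ => (Fin.succ_ne_zero _).symm]
  ext k
  cases k using Fin.cases <;> simp [add_mulVec, sum_mulVec, single_mulVec_eq, Pi.single_apply]

theorem rowZeroTransvection_smul (u : Fin n → R) (v : Fin (n + 1) → R) :
    rowZeroTransvection u • v = Fin.cons (v 0 + ∑ i, u i * v i.succ) fun i => v i.succ := by
  rw [Matrix.SpecialLinearGroup.smul_def, rowZeroTransvection,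
    coe_prod_ofFn_transvection _ fun _ _ => Fin.succ_ne_zero _]
  ext k
  cases k using Fin.cases <;> simp [add_mulVec, sum_mulVec, single_mulVec_eq]

theorem mul_rowZeroTransvection_apply_succ (M : Matrix (Fin (n + 1)) (Fin (n + 1)) R)
    (u : Fin n → R) (i : Fin (n + 1)) (j : Fin n) :
    (M * rowZeroTransvection u) i j.succ = M i j.succ + M i 0 * u j := by
  rw [rowZeroTransvection, coe_prod_ofFn_transvection _ fun _ _ => Fin.succ_ne_zero _,
    Matrix.mul_add, Matrix.mul_one, add_apply, Matrix.mul_sum, Matrix.sum_apply,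
    Finset.sum_eq_single j (fun k _ hk => mul_single_apply_of_ne _ _ _ _ _
      ((Fin.succ_injective _).ne hk.symm) _) (by simp), mul_single_apply_same]

theorem mul_rowZeroTransvection_apply_zero (M : Matrix (Fin (n + 1)) (Fin (n + 1)) R)
    (u : Fin n → R) (i : Fin (n + 1)) :
    (M * rowZeroTransvection u) i 0 = M i 0 := by
  rw [rowZeroTransvection, coe_prod_ofFn_transvection _ fun _ _ => Fin.succ_ne_zero _,
    Matrix.mul_add, Matrix.mul_one, add_apply, Matrix.mul_sum, Matrix.sum_apply,
    Finset.sum_eq_zero fun k _ => mul_single_apply_of_ne _ _ _ _ _ (Fin.succ_ne_zero k).symm _,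
    add_zero]

def oneBlock (C : Matrix (Fin n) (Fin n) R) : Matrix (Fin (n + 1)) (Fin (n + 1)) R :=
  Matrix.of (Fin.cons (Fin.cons 1 0) fun i => Fin.cons 0 (C i))

@[simp]
theorem oneBlock_zero_zero (C : Matrix (Fin n) (Fin n) R) : oneBlock C 0 0 = 1 := rfl

@[simp]
theorem oneBlock_zero_succ (C : Matrix (Fin n) (Fin n) R) (j : Fin n) :
    oneBlock C 0 j.succ = 0 := rfl

@[simp]
theorem oneBlock_succ_zero (C : Matrix (Fin n) (Fin n) R) (i : Fin n) :
    oneBlock C i.succ 0 = 0 := rfl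

@[simp]
theorem oneBlock_succ_succ (C : Matrix (Fin n) (Fin n) R) (i j : Fin n) :
    oneBlock C i.succ j.succ = C i j := rfl

@[simp]
theorem oneBlock_submatrix_succ (C : Matrix (Fin n) (Fin n) R) :
    (oneBlock C).submatrix Fin.succ Fin.succ = C := rfl

theorem oneBlock_one : oneBlock (1 : Matrix (Fin n) (Fin n) R) = 1 := by
  ext i j
  cases i using Fin.cases <;> cases j using Fin.cases <;>
    simp [one_apply, fun i : Fin n => (Fin.succ_ne_zero i).symm]

theorem oneBlock_mul (C D : Matrix (Fin n) (Fin n) R) :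
    oneBlock (C * D) = oneBlock C * oneBlock D := by
  ext i j
  cases i using Fin.cases <;> cases j using Fin.cases <;> simp [mul_apply, Fin.sum_univ_succ]

theorem det_oneBlock (C : Matrix (Fin n) (Fin n) R) : (oneBlock C).det = C.det := by
  rw [det_succ_row_zero, Fin.sum_univ_succ]
  simp [Fin.succAbove_zero]

theorem oneBlock_transvection (i j : Fin n) (t : R) :
    oneBlock (Matrix.transvection i j t) = Matrix.transvection i.succ j.succ t := by
  ext a b
  cases a using Fin.cases <;> cases b using Fin.cases <;>
    simp [Matrix.transvection, one_apply, single_apply, fun i : Fin n => (Fin.succ_ne_zero i).symm]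

def oneBlockHom : SL(n, R) →* SL(n + 1, R) where
  toFun C := ⟨oneBlock C.1, (det_oneBlock _).trans C.2⟩
  map_one' := Subtype.ext oneBlock_one
  map_mul' C D := Subtype.ext (oneBlock_mul C.1 D.1)

theorem elementarySubgroup_le_comap_oneBlockHom :
    ElementarySubgroup n R ≤ (ElementarySubgroup (n + 1) R).comap oneBlockHom :=
  (Subgroup.closure_le _).2 fun _ ⟨i, j, t, hij, hA⟩ => Subgroup.subset_closure
    ⟨i.succ, j.succ, t, (Fin.succ_injective n).ne hij,
      by rw [← oneBlock_transvection, ← hA]; rfl⟩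

theorem mem_elementarySubgroup_of_smul_single (h : IsElementaryGenerated n R)
    {A : SL(n + 1, R)} (hA : A • (Pi.single 0 1 : Fin (n + 1) → R) = Pi.single 0 1) :
    A ∈ ElementarySubgroup (n + 1) R := by
  set U := rowZeroTransvection fun j => -A 0 j.succ
  have hcol : ∀ i, A i 0 = (Pi.single 0 1 : Fin (n + 1) → R) i := fun i => by
    simpa [Matrix.SpecialLinearGroup.smul_def] using congrFun hA i
  set B := ((A * U : SL(n + 1, R)) : Matrix (Fin (n + 1)) (Fin (n + 1)) R).submatrix
    Fin.succ Fin.succ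
  have hAU : ((A * U : SL(n + 1, R)) : Matrix (Fin (n + 1)) (Fin (n + 1)) R) = oneBlock B := by
    ext i j
    cases i using Fin.cases <;> cases j using Fin.cases <;>
      simp [B, U, mul_rowZeroTransvection_apply_succ, mul_rowZeroTransvection_apply_zero, hcol]
  have hB : B.det = 1 := by rw [← det_oneBlock, ← hAU]; exact (A * U).2
  rw [← Subgroup.mul_mem_cancel_right _ (rowZeroTransvection_mem _ : U ∈ _),
    show A * U = oneBlockHom ⟨B, hB⟩ from Subtype.ext hAU]
  exact elementarySubgroup_le_comap_oneBlockHom (h ▸ Subgroup.mem_top _)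

theorem exists_mem_elementarySubgroup_smul_eq_single (v : Fin (n + 1) → R) (t : Fin n → R)
    (ht : Ideal.span (Set.range fun i => v i.succ + t i * v 0) = ⊤) :
    ∃ P ∈ ElementarySubgroup (n + 1) R, P • v = Pi.single 0 1 := by
  set w := fun i => v i.succ + t i * v 0
  obtain ⟨c, hc⟩ :=
    Ideal.mem_span_range_iff_exists_fun.1 (ht ▸ Submodule.mem_top : (1 : R) ∈ _)
  have h₁ : colZeroTransvection t • v = Fin.cons (v 0) w := colZeroTransvection_smul t v
  -- adding `1 - v 0` times the relation `∑ c i * w i = 1` turns the first entry into `1`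
  have h₂ : rowZeroTransvection (fun i => (1 - v 0) * c i) •
      (Fin.cons (v 0) w : Fin (n + 1) → R) = Fin.cons 1 w := by
    simp [rowZeroTransvection_smul, mul_assoc, ← Finset.mul_sum, hc]
  have h₃ : colZeroTransvection (-w) • (Fin.cons 1 w : Fin (n + 1) → R) = Pi.single 0 1 := by
    rw [colZeroTransvection_smul]
    ext i
    cases i using Fin.cases <;> simp
  refine ⟨colZeroTransvection (-w) * rowZeroTransvection (fun i => (1 - v 0) * c i) *
    colZeroTransvection t, mul_mem (mul_mem (colZeroTransvection_mem _)
      (rowZeroTransvection_mem _)) (colZeroTransvection_mem _), ?_⟩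
  rw [mul_smul, mul_smul, h₁, h₂, h₃]

theorem span_range_smul_single_eq_top {ι : Type*} [Fintype ι] [DecidableEq ι]
    (A : SpecialLinearGroup ι R) (j : ι) :
    Ideal.span (Set.range (A • (Pi.single j 1 : ι → R))) = ⊤ := by
  rw [Ideal.eq_top_iff_one, Ideal.mem_span_range_iff_exists_fun]
  exact ⟨fun k => (A⁻¹ : SpecialLinearGroup ι R) j k, by
    simpa [Matrix.SpecialLinearGroup.smul_def, mulVec, dotProduct, Pi.single_apply] using
      congrFun (inv_smul_smul A (Pi.single j 1 : ι → R)) j⟩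

end Matrix.SpecialLinearGroup

open Matrix.SpecialLinearGroup in
theorem isElementaryGenerated_add_three {R : Type} [CommRing R] [IsNoetherianRing R]
    [Ring.KrullDimLE 1 R] {m : ℕ} (h : IsElementaryGenerated (m + 2) R) :
    IsElementaryGenerated (m + 3) R := by
  refine eq_top_iff.2 fun A _ => ?_
  obtain ⟨t, ht⟩ := exists_span_range_add_mul_eq_top _ (span_range_smul_single_eq_top A 0)
  obtain ⟨P, hP, hPA⟩ := exists_mem_elementarySubgroup_smul_eq_single _ t ht
  rw [← Subgroup.mul_mem_cancel_left _ hP]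
  exact mem_elementarySubgroup_of_smul_single h (by rw [mul_smul, hPA])

/-- If `R` is a Noetherian ring of Krull dimension at most `1` with `SL_2(R) = E_2(R)`,
then `SL_n(R) = E_n(R)` for all `n ≥ 2`. -/
theorem stmt_13 (R : Type) [CommRing R] [IsNoetherianRing R]
    (hdim : ringKrullDim R ≤ 1) (h2 : IsElementaryGenerated 2 R) :
    ∀ n : ℕ, 2 ≤ n → IsElementaryGenerated n R := by
  have : Ring.KrullDimLE 1 R := Ring.krullDimLE_iff.2 hdim
  intro n hn
  induction n, hn using Nat.le_induction with
  | base => exact h2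
  | succ n hn ih =>
    obtain ⟨m, rfl⟩ := Nat.exists_eq_add_of_le' hn
    exact isElementaryGenerated_add_three ih
end
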